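/- If N is a strongly 2-absorbing second submodule of M, then Ann_R(N) is a 2-absorbing ideal of R. -/

import Mathlib

open Pointwise

/-- A proper ideal `I` is 2-absorbing if `a*b*c ∈ I` implies `a*b ∈ I` or `a*c ∈ I`
or `b*c ∈ I`. -/
def Is2AbsorbingIdeal {R : Type*} [CommRing R] (I : Ideal R) : Prop :=
  I ≠ ⊤ ∧ ∀ a b c : R, a * b * c ∈ I → a * b ∈ I ∨ a * c ∈ I ∨ b * c ∈ I

/-- A nonzero submodule `N` is strongly 2-absorbing second (elementwise form):
for all `a b : R`, `a • b • N = a • N` or `a • b • N = b • N` or `a • b • N = ⊥`. -/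
def IsStrongly2AbsorbingSecond {R M : Type*} [CommRing R] [AddCommGroup M] [Module R M]
    (N : Submodule R M) : Prop :=
  N ≠ ⊥ ∧ ∀ a b : R, a • b • N = a • N ∨ a • b • N = b • N ∨ a • b • N = ⊥

namespace Submodule

variable {R M : Type*} [CommSemiring R] [AddCommMonoid M] [Module R M]

theorem pointwise_smul_eq_bot_iff (r : R) (N : Submodule R M) :
    r • N = ⊥ ↔ r ∈ N.annihilator := by
  simp [eq_bot_iff, pointwise_smul_def, SetLike.le_def, mem_annihilator]

theorem mem_annihilator_pointwise_smul (r t : R) (N : Submodule R M) :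
    t ∈ (r • N).annihilator ↔ t * r ∈ N.annihilator := by
  rw [← pointwise_smul_eq_bot_iff, ← pointwise_smul_eq_bot_iff, mul_smul]

end Submodule

theorem annihilator_2absorbing_of_strongly2AbsorbingSecond
    {R M : Type*} [CommRing R] [AddCommGroup M] [Module R M]
    (N : Submodule R M) (hN : IsStrongly2AbsorbingSecond N) :
    Is2AbsorbingIdeal N.annihilator := by
  obtain ⟨hN0, hN⟩ := hN
  refine ⟨mt Submodule.annihilator_eq_top_iff.mp hN0, fun a b c habc => ?_⟩
  have hc : c ∈ (a • b • N).annihilator := by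
    rwa [← mul_smul, Submodule.mem_annihilator_pointwise_smul, mul_comm]
  rcases hN a b with h | h | h
  · rw [h, Submodule.mem_annihilator_pointwise_smul, mul_comm] at hc
    exact Or.inr (Or.inl hc)
  · rw [h, Submodule.mem_annihilator_pointwise_smul, mul_comm] at hc
    exact Or.inr (Or.inr hc)
  · rw [← mul_smul, Submodule.pointwise_smul_eq_bot_iff] at h
    exact Or.inl h
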